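/- arXiv:2203.08704 — 4 statements merged into one kernel-verified Lean document; each statement's English description precedes it below -/
import Mathlib

section
/- Let b be a real number with |1+2b| ≤ 1 and define f₁(z) = (z - z²)/((1+z)(1 - 2(1+2b)z + z²)) on the open unit disk D. Then for all z ∈ D \ {0}, Re((1+z)²f₁(z)/z) > 0. -/
/-!
Put `t = 1 + 2b`. Then `(1 + z)² f₁(z) / z = (1 - z²) / (1 - 2tz + z²) = (1 - w) / (1 + w)` with
`w = z (z - t) / (1 - tz)`. For `|t| ≤ 1` one has `|z - t| ≤ |1 - tz|` on the disc, so `|w| < 1`,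
and the Cayley map `w ↦ (1 - w) / (1 + w)` sends the unit disc into the right half-plane.
-/

open ComplexConjugate

namespace Complex

theorem re_one_sub_div_one_add_pos {w : ℂ} (hw : ‖w‖ < 1) : 0 < ((1 - w) / (1 + w)).re := by
  have hw1 : 1 + w ≠ 0 := fun h ↦ by
    simp [eq_neg_of_add_eq_zero_right h] at hw
  have hnormSq : normSq w < 1 := by
    rw [normSq_eq_norm_sq]; exact pow_lt_one₀ (norm_nonneg w) hw two_ne_zero
  -- `Re ((1 - w) / (1 + w)) = (1 - |w|²) / |1 + w|²`
  rw [div_re, ← add_div]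
  refine div_pos ?_ (normSq_pos.mpr hw1)
  rw [normSq_apply] at hnormSq
  simp only [add_re, sub_re, one_re, add_im, sub_im, one_im]
  nlinarith

theorem normSq_one_sub_conj_mul_sub_normSq_sub (z c : ℂ) :
    normSq (1 - conj c * z) - normSq (z - c) = (1 - normSq z) * (1 - normSq c) := by
  simp only [normSq_apply, sub_re, sub_im, mul_re, mul_im, conj_re, conj_im, one_re, one_im]
  ring

theorem norm_sub_le_norm_one_sub_conj_mul {z c : ℂ} (hz : ‖z‖ ≤ 1) (hc : ‖c‖ ≤ 1) :
    ‖z - c‖ ≤ ‖1 - conj c * z‖ := by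
  have hz' : normSq z ≤ 1 := by rw [normSq_eq_norm_sq]; exact pow_le_one₀ (norm_nonneg z) hz
  have hc' : normSq c ≤ 1 := by rw [normSq_eq_norm_sq]; exact pow_le_one₀ (norm_nonneg c) hc
  rw [← sq_le_sq₀ (norm_nonneg _) (norm_nonneg _), Complex.sq_norm, Complex.sq_norm]
  nlinarith [normSq_one_sub_conj_mul_sub_normSq_sub z c,
    mul_nonneg (sub_nonneg.mpr hz') (sub_nonneg.mpr hc')]

theorem one_sub_conj_mul_ne_zero {z c : ℂ} (hz : ‖z‖ < 1) (hc : ‖c‖ ≤ 1) :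
    1 - conj c * z ≠ 0 := by
  have : ‖conj c * z‖ < 1 := by
    rw [norm_mul, RCLike.norm_conj]
    nlinarith [norm_nonneg z, norm_nonneg c]
  intro h
  rw [← eq_of_sub_eq_zero h, norm_one] at this
  exact lt_irrefl _ this

theorem norm_mul_sub_div_one_sub_conj_mul_lt_one {z c : ℂ} (hz : ‖z‖ < 1) (hc : ‖c‖ ≤ 1) :
    ‖z * (z - c) / (1 - conj c * z)‖ < 1 := by
  have hden := norm_pos_iff.mpr (one_sub_conj_mul_ne_zero hz hc)
  rw [norm_div, norm_mul, div_lt_one hden]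
  calc ‖z‖ * ‖z - c‖ ≤ ‖z‖ * ‖1 - conj c * z‖ :=
        mul_le_mul_of_nonneg_left (norm_sub_le_norm_one_sub_conj_mul hz.le hc) (norm_nonneg z)
    _ < ‖1 - conj c * z‖ := mul_lt_of_lt_one_left hden hz

theorem re_one_sub_sq_div_pos {t : ℝ} (ht : |t| ≤ 1) {z : ℂ} (hz : ‖z‖ < 1) :
    0 < ((1 - z ^ 2) / (1 - 2 * t * z + z ^ 2)).re := by
  have htc : ‖(t : ℂ)‖ ≤ 1 := by rwa [norm_real, Real.norm_eq_abs]
  have hw := norm_mul_sub_div_one_sub_conj_mul_lt_one hz htc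
  have hden := one_sub_conj_mul_ne_zero hz htc
  rw [conj_ofReal] at hw hden
  set w := z * (z - t) / (1 - t * z)
  have hmul : (1 - t * z) * w = z * (z - t) := mul_div_cancel₀ _ hden
  convert re_one_sub_div_one_add_pos hw using 2
  rw [← mul_div_mul_left (1 - w) (1 + w) hden]
  congr 1
  · linear_combination hmul
  · linear_combination -hmul

end Complex

theorem f1_in_class (b : ℝ) (hb : |1 + 2 * b| ≤ 1)
    (f₁ : ℂ → ℂ)
    (hf : ∀ z, f₁ z = (z - z ^ 2) / ((1 + z) * (1 - 2 * (1 + 2 * b) * z + z ^ 2))) :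
    ∀ z ∈ Metric.ball (0 : ℂ) 1, z ≠ 0 → 0 < ((1 + z) ^ 2 * f₁ z / z).re := by
  intro z hz hz0
  rw [mem_ball_zero_iff] at hz
  have hz1 : 1 + z ≠ 0 := fun h ↦ by simp [eq_neg_of_add_eq_zero_right h] at hz
  have hf₁ : (1 + z) ^ 2 * f₁ z / z = (1 - z ^ 2) / (1 - 2 * ((1 + 2 * b : ℝ) : ℂ) * z + z ^ 2) := by
    rw [hf]
    push_cast
    rw [← mul_div_mul_left (1 - z ^ 2) _ (mul_ne_zero hz0 hz1), mul_div_assoc', div_div]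
    congr 1 <;> ring
  rw [hf₁]
  exact Complex.re_one_sub_sq_div_pos hb hz
end

section
/- Let b be a real number with |1+3b| ≤ 2 and define f₃(z) = z(1 + (1+3b)z + z²)/((1+z)(1-z²)) on the open unit disk D. Then for all z ∈ D \ {0}, Re((1+z)f₃(z)/z) > 0. -/
/-!
With `a = (1 + 3b)/2` real and `|a| ≤ 1`, one has `(1 + z) f₃(z) / z = (1 + w) / (1 - w)` for
`w = z (z + a) / (1 + a z)`. Since `|1 + a z|² - |z + a|² = (1 - a²)(1 - |z|²) ≥ 0`, we get
`|w| ≤ |z| < 1`, and `Re ((1 + w) / (1 - w)) = (1 - |w|²) / |1 - w|² > 0`.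
-/

theorem one_add_ne_zero_of_norm_lt_one {R : Type*} [SeminormedRing R] [NormOneClass R] {w : R}
    (hw : ‖w‖ < 1) : 1 + w ≠ 0 :=
  fun h => by simp [eq_neg_of_add_eq_zero_right h] at hw

theorem one_add_two_mul_add_sq_div_one_sub_sq {K : Type*} [Field K] {a z : K} (h : 1 + a * z ≠ 0) :
    (1 + 2 * a * z + z ^ 2) / (1 - z ^ 2) =
      (1 + z * ((z + a) / (1 + a * z))) / (1 - z * ((z + a) / (1 + a * z))) := by
  have hadd : 1 + z * ((z + a) / (1 + a * z)) = (1 + 2 * a * z + z ^ 2) / (1 + a * z) := by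
    rw [mul_div_assoc', one_add_div h]; ring
  have hsub : 1 - z * ((z + a) / (1 + a * z)) = (1 - z ^ 2) / (1 + a * z) := by
    rw [mul_div_assoc', one_sub_div h]; ring
  rw [hadd, hsub, div_div_div_cancel_right₀ h]

namespace Complex

theorem re_one_add_div_one_sub_pos {w : ℂ} (hw : ‖w‖ < 1) : 0 < ((1 + w) / (1 - w)).re := by
  have hnormSq : normSq w < 1 := by rw [← Complex.sq_norm]; nlinarith [norm_nonneg w]
  rw [div_re, ← add_div]
  refine div_pos ?_ (normSq_pos.mpr (isUnit_one_sub_of_norm_lt_one hw).ne_zero)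
  simp only [add_re, sub_re, add_im, sub_im, one_re, one_im, normSq_apply] at hnormSq ⊢
  nlinarith

theorem norm_add_ofReal_le_norm_one_add_ofReal_mul {a : ℝ} (ha : |a| ≤ 1) {z : ℂ} (hz : ‖z‖ ≤ 1) :
    ‖z + a‖ ≤ ‖1 + a * z‖ := by
  have ha2 : a ^ 2 ≤ 1 := by nlinarith [abs_nonneg a, sq_abs a]
  have hz2 : normSq z ≤ 1 := by rw [← Complex.sq_norm]; nlinarith [norm_nonneg z]
  rw [← sq_le_sq₀ (norm_nonneg _) (norm_nonneg _), Complex.sq_norm, Complex.sq_norm]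
  simp only [normSq_apply, add_re, add_im, mul_re, mul_im, ofReal_re, ofReal_im, one_re, one_im]
    at hz2 ⊢
  nlinarith [mul_nonneg (sub_nonneg.mpr ha2) (sub_nonneg.mpr hz2)]

theorem norm_mul_add_ofReal_div_lt_one {a : ℝ} (ha : |a| ≤ 1) {z : ℂ} (hz : ‖z‖ < 1) :
    ‖z * ((z + a) / (1 + a * z))‖ < 1 := by
  rw [norm_mul, norm_div]
  exact mul_lt_one_of_nonneg_of_lt_one_left (norm_nonneg z) hz <|
    div_le_one_of_le₀ (norm_add_ofReal_le_norm_one_add_ofReal_mul ha hz.le) (norm_nonneg _)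

end Complex

theorem f3_in_class (b : ℝ) (hb : |1 + 3 * b| ≤ 2)
    (f₃ : ℂ → ℂ)
    (hf : ∀ z, f₃ z = z * (1 + (1 + 3 * b) * z + z ^ 2) / ((1 + z) * (1 - z ^ 2))) :
    ∀ z ∈ Metric.ball (0 : ℂ) 1, z ≠ 0 → 0 < ((1 + z) * f₃ z / z).re := by
  intro z hz hz0
  rw [mem_ball_zero_iff] at hz
  set a : ℝ := (1 + 3 * b) / 2 with ha_def
  have ha : |a| ≤ 1 := by rw [abs_div, abs_two]; linarith
  have hz1 : 1 + z ≠ 0 := one_add_ne_zero_of_norm_lt_one hz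
  have haz : 1 + a * z ≠ 0 := by
    refine one_add_ne_zero_of_norm_lt_one ?_
    rw [norm_mul, Complex.norm_real, Real.norm_eq_abs]
    exact mul_lt_one_of_nonneg_of_lt_one_right ha (norm_nonneg z) hz
  have hquot : (1 + z) * f₃ z / z = (1 + 2 * a * z + z ^ 2) / (1 - z ^ 2) := by
    rw [hf, ha_def]; push_cast; field_simp
  rw [hquot, one_add_two_mul_add_sq_div_one_sub_sq haz]
  exact Complex.re_one_add_div_one_sub_pos (Complex.norm_mul_add_ofReal_div_lt_one ha hz)
end

section
/- Let 0 ≤ b₁ ≤ 1 be real. Define Q(r) = (1+√2)r⁴ + 2(1 + √2(1+√2)b₁)r³ + 2(3+2b₁)r² + 2(1 + √2(√2-1)b₁)r + 1 - √2. Then Q has a unique root in the open interval (0,1). -/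
theorem root_unique_lemniscate (b₁ : ℝ) (hb0 : 0 ≤ b₁) (hb1 : b₁ ≤ 1) :
    ∃! r, r ∈ Set.Ioo (0 : ℝ) 1 ∧
      (1 + Real.sqrt 2) * r ^ 4 + 2 * (1 + Real.sqrt 2 * (1 + Real.sqrt 2) * b₁) * r ^ 3 +
        2 * (3 + 2 * b₁) * r ^ 2 + 2 * (1 + Real.sqrt 2 * (Real.sqrt 2 - 1) * b₁) * r +
        1 - Real.sqrt 2 = 0 := by
  have hs2 : Real.sqrt 2 ^ 2 = 2 := Real.sq_sqrt (by norm_num)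
  have hs2nn : 0 ≤ Real.sqrt 2 := Real.sqrt_nonneg 2
  have h1lt : (1:ℝ) < Real.sqrt 2 := by nlinarith
  have hlt2 : Real.sqrt 2 < 2 := by nlinarith
  set f : ℝ → ℝ := fun r =>
      (1 + Real.sqrt 2) * r ^ 4 + 2 * (1 + Real.sqrt 2 * (1 + Real.sqrt 2) * b₁) * r ^ 3 +
        2 * (3 + 2 * b₁) * r ^ 2 + 2 * (1 + Real.sqrt 2 * (Real.sqrt 2 - 1) * b₁) * r +
        1 - Real.sqrt 2 with hf
  have hmono : ∀ x y : ℝ, 0 ≤ x → x < y → f x < f y := by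
    intro x y hx0 hxy
    have hy0 : 0 ≤ y := le_of_lt (lt_of_le_of_lt hx0 hxy)
    have h4 : x ^ 4 ≤ y ^ 4 := pow_le_pow_left₀ hx0 hxy.le 4
    have h3 : x ^ 3 ≤ y ^ 3 := pow_le_pow_left₀ hx0 hxy.le 3
    have h2 : x ^ 2 ≤ y ^ 2 := pow_le_pow_left₀ hx0 hxy.le 2
    have c3 : 0 ≤ Real.sqrt 2 * (1 + Real.sqrt 2) * b₁ := by positivity
    have c1 : 0 ≤ Real.sqrt 2 * (Real.sqrt 2 - 1) * b₁ := by
      apply mul_nonneg (mul_nonneg hs2nn (by linarith)) hb0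
    simp only [hf]
    nlinarith [mul_nonneg c3 (sub_nonneg.mpr h3), mul_nonneg c1 (sub_nonneg.mpr hxy.le),
      mul_nonneg hb0 (sub_nonneg.mpr h2)]
  have hcont : ContinuousOn f (Set.Icc (0:ℝ) 1) := by
    apply Continuous.continuousOn; simp only [hf]; fun_prop
  have hf0 : f 0 < 0 := by simp only [hf]; norm_num; linarith
  have hf1 : 0 < f 1 := by simp only [hf]; nlinarith
  have hsub := intermediate_value_Ioo (by norm_num : (0:ℝ) ≤ 1) hcont
  have h0mem : (0:ℝ) ∈ Set.Ioo (f 0) (f 1) := ⟨hf0, hf1⟩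
  obtain ⟨r, hr, hfr⟩ := hsub h0mem
  refine ⟨r, ⟨hr, hfr⟩, ?_⟩
  rintro s ⟨hs, hfs⟩
  have hfs' : f s = 0 := hfs
  by_contra hne
  rcases lt_or_gt_of_ne hne with h | h
  · have := hmono s r hs.1.le h
    rw [hfs', hfr] at this; exact lt_irrefl 0 this
  · have := hmono r s hr.1.le h
    rw [hfs', hfr] at this; exact lt_irrefl 0 this
end

section
/- Let h be analytic on the open unit disk D with h(0) = 1, h'(0) = 2b(1-α) for some real b with |b| ≤ 1, and Re h(z) > α on D, where 0 ≤ α < 1. Then for |z| = r < 1 with h(z) ≠ 0: |z h'(z)/h(z)| ≤ (2(1-α)r/(1-r²)) · (|b|r² + 2r + |b|)/((1-2α)r² + 2(1-α)|b|r + 1). -/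
/-!
Put `κ = 1 - 2α` and `ω = (h - 1) / (h + κ)`. Since `Re h > α`, `ω` is a self-map of the unit disc
with `ω 0 = 0` and `ω' 0 = b`, and `h = (1 + κ ω) / (1 - ω)`, so
`z h' / h = 2 (1 - α) z ω' / ((1 - ω) (1 + κ ω))`. By Schwarz's lemma `φ = ω / z` maps the disc
into its closure with `φ 0 = b`; Schwarz–Pick bounds `t = |φ z|` by `(r + |b|) / (1 + |b| r)` and
`|φ' z|` by `(1 - t²) / (1 - r²)`. With `ω' = φ + z φ'` and `|(1 - ω)(1 + κ ω)| ≥ (1 - rt)(1 + κrt)`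
the quotient is at most `r / (1 - r²) · (r + t) / (1 + κ r t)`, which increases in `t`.
-/

open Complex ComplexConjugate Metric Set Function

noncomputable def mobius (a z : ℂ) : ℂ := (a - z) / (1 - conj a * z)

section Mobius

variable {a z : ℂ}

@[simp] lemma mobius_zero_right (a : ℂ) : mobius a 0 = a := by simp [mobius]

@[simp] lemma mobius_self (a : ℂ) : mobius a a = 0 := by simp [mobius]

lemma one_sub_conj_mul_ne_zero (ha : ‖a‖ ≤ 1) (hz : ‖z‖ < 1) : 1 - conj a * z ≠ 0 := by
  have : ‖conj a * z‖ < 1 := by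
    rw [norm_mul, norm_conj]
    nlinarith [norm_nonneg a, norm_nonneg z]
  intro h
  rw [← sub_eq_zero.1 h, norm_one] at this
  exact this.false

lemma sq_norm_one_sub_conj_mul_sub_sq_norm_sub (a z : ℂ) :
    ‖1 - conj a * z‖ ^ 2 - ‖a - z‖ ^ 2 = (1 - ‖a‖ ^ 2) * (1 - ‖z‖ ^ 2) := by
  simp only [Complex.sq_norm, normSq_apply, sub_re, sub_im, mul_re, mul_im, conj_re, conj_im,
    one_re, one_im]
  ring

lemma norm_mobius_lt_one (ha : ‖a‖ < 1) (hz : ‖z‖ < 1) : ‖mobius a z‖ < 1 := by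
  have hd := one_sub_conj_mul_ne_zero ha.le hz
  rw [mobius, norm_div, div_lt_one (norm_pos_iff.2 hd), ← sq_lt_sq₀ (norm_nonneg _)
    (norm_nonneg _)]
  have := sq_norm_one_sub_conj_mul_sub_sq_norm_sub a z
  have : 0 < (1 - ‖a‖ ^ 2) * (1 - ‖z‖ ^ 2) := by
    apply mul_pos <;> nlinarith [norm_nonneg a, norm_nonneg z]
  linarith

lemma hasDerivAt_mobius (hd : 1 - conj a * z ≠ 0) :
    HasDerivAt (mobius a) ((conj a * a - 1) / (1 - conj a * z) ^ 2) z := by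
  have := ((hasDerivAt_id z).const_sub a).div
    (((hasDerivAt_id z).const_mul (conj a)).const_sub 1) hd
  exact this.congr_deriv (by simp only [id]; ring)

lemma hasDerivAt_mobius_self (ha : ‖a‖ < 1) :
    HasDerivAt (mobius a) (-(1 - ‖a‖ ^ 2 : ℂ)⁻¹) a := by
  have hd := one_sub_conj_mul_ne_zero ha.le ha
  refine (hasDerivAt_mobius hd).congr_deriv ?_
  rw [conj_mul'] at hd ⊢
  field_simp
  ring

lemma hasDerivAt_mobius_zero (a : ℂ) : HasDerivAt (mobius a) (‖a‖ ^ 2 - 1 : ℂ) 0 := by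
  simpa [conj_mul'] using hasDerivAt_mobius (a := a) (z := 0) (by simp)

lemma differentiableOn_mobius (ha : ‖a‖ ≤ 1) : DifferentiableOn ℂ (mobius a) (ball 0 1) :=
  fun _ hz => (hasDerivAt_mobius (one_sub_conj_mul_ne_zero ha
    (mem_ball_zero_iff.1 hz))).differentiableAt.differentiableWithinAt

lemma mapsTo_mobius_ball (ha : ‖a‖ < 1) : MapsTo (mobius a) (ball 0 1) (ball 0 1) :=
  fun _ hz => mem_ball_zero_iff.2 (norm_mobius_lt_one ha (mem_ball_zero_iff.1 hz))

lemma norm_mul_le_of_norm_mobius_le {w : ℂ} {ρ : ℝ} (ha : ‖a‖ < 1) (hw : ‖w‖ < 1)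
    (hρ : ρ ≤ 1) (h : ‖mobius a w‖ ≤ ρ) : ‖w‖ * (1 + ‖a‖ * ρ) ≤ ρ + ‖a‖ := by
  have hρ0 : 0 ≤ ρ := (norm_nonneg _).trans h
  have hd := one_sub_conj_mul_ne_zero ha.le hw
  rw [mobius, norm_div, div_le_iff₀ (norm_pos_iff.2 hd)] at h
  set R := (conj a * w).re
  have hR : R ≤ ‖a‖ * ‖w‖ := by
    simpa only [norm_mul, norm_conj] using re_le_norm (conj a * w)
  have hnum : ‖a - w‖ ^ 2 = ‖a‖ ^ 2 - 2 * R + ‖w‖ ^ 2 := by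
    simp only [R, Complex.sq_norm, normSq_apply, sub_re, sub_im, mul_re, conj_re, conj_im]
    ring
  have hden : ‖1 - conj a * w‖ ^ 2 = 1 - 2 * R + ‖a‖ ^ 2 * ‖w‖ ^ 2 := by
    simp only [R, Complex.sq_norm, normSq_apply, sub_re, sub_im, mul_re, mul_im, conj_re,
      conj_im, one_re, one_im]
    ring
  have hsq : ‖a - w‖ ^ 2 ≤ ρ ^ 2 * ‖1 - conj a * w‖ ^ 2 := by
    rw [← mul_pow]; exact pow_le_pow_left₀ (norm_nonneg _) h 2
  have hax : ‖a‖ * ‖w‖ ≤ 1 := by nlinarith [norm_nonneg a, norm_nonneg w]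
  have key : (‖w‖ - ‖a‖) ^ 2 ≤ (ρ * (1 - ‖a‖ * ‖w‖)) ^ 2 := by
    nlinarith [mul_nonneg (sub_nonneg.2 hR) (by nlinarith : 0 ≤ 1 - ρ ^ 2)]
  nlinarith [(abs_le_of_sq_le_sq' key (mul_nonneg hρ0 (sub_nonneg.2 hax))).2]

end Mobius

section SchwarzPick

variable {g : ℂ → ℂ} {z : ℂ}

lemma norm_apply_mul_le_of_mapsTo_ball (hg : DifferentiableOn ℂ g (ball 0 1))
    (hmaps : MapsTo g (ball 0 1) (ball 0 1)) (hz : z ∈ ball (0 : ℂ) 1) :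
    ‖g z‖ * (1 + ‖g 0‖ * ‖z‖) ≤ ‖z‖ + ‖g 0‖ := by
  have hg0 : ‖g 0‖ < 1 := mem_ball_zero_iff.1 (hmaps (mem_ball_self one_pos))
  have hz1 : ‖z‖ < 1 := mem_ball_zero_iff.1 hz
  refine norm_mul_le_of_norm_mobius_le hg0 (mem_ball_zero_iff.1 (hmaps hz)) hz1.le ?_
  exact Complex.norm_le_norm_of_mapsTo_ball ((differentiableOn_mobius hg0.le).comp hg hmaps)
    (((mapsTo_mobius_ball hg0).comp hmaps).mono_right ball_subset_closedBall) (by simp) hz1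

lemma norm_deriv_mul_le_of_mapsTo_ball (hg : DifferentiableOn ℂ g (ball 0 1))
    (hmaps : MapsTo g (ball 0 1) (ball 0 1)) (hz : z ∈ ball (0 : ℂ) 1) :
    ‖deriv g z‖ * (1 - ‖z‖ ^ 2) ≤ 1 - ‖g z‖ ^ 2 := by
  have hz1 : ‖z‖ < 1 := mem_ball_zero_iff.1 hz
  have hgz : ‖g z‖ < 1 := mem_ball_zero_iff.1 (hmaps hz)
  set F := mobius (g z) ∘ g ∘ mobius z
  have hF : HasDerivAt F (-(1 - ‖g z‖ ^ 2 : ℂ)⁻¹ * (deriv g z * (‖z‖ ^ 2 - 1))) 0 := by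
    have hg' : HasDerivAt g (deriv g z) (mobius z 0) := by
      rw [mobius_zero_right]; exact (hg.differentiableAt (isOpen_ball.mem_nhds hz)).hasDerivAt
    have hm : HasDerivAt (mobius (g z)) (-(1 - ‖g z‖ ^ 2 : ℂ)⁻¹) (g (mobius z 0)) := by
      rw [mobius_zero_right]; exact hasDerivAt_mobius_self hgz
    exact hm.comp 0 (hg'.comp 0 (hasDerivAt_mobius_zero z))
  have hdF : DifferentiableOn ℂ F (ball 0 1) :=
    (differentiableOn_mobius hgz.le).comp
      (hg.comp (differentiableOn_mobius hz1.le) (mapsTo_mobius_ball hz1))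
      (hmaps.comp (mapsTo_mobius_ball hz1))
  have hmapsF : MapsTo F (ball 0 1) (closedBall (F 0) 1) := by
    simpa [F] using ((mapsTo_mobius_ball hgz).comp (hmaps.comp (mapsTo_mobius_ball hz1))).mono_right
      ball_subset_closedBall
  have hschwarz := Complex.norm_deriv_le_one_of_mapsTo_ball hdF hmapsF one_pos
  have e1 : (1 - ‖g z‖ ^ 2 : ℂ) = ((1 - ‖g z‖ ^ 2 : ℝ) : ℂ) := by push_cast; ring
  have e2 : (‖z‖ ^ 2 - 1 : ℂ) = ((‖z‖ ^ 2 - 1 : ℝ) : ℂ) := by push_cast; ring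
  have ht : 0 < 1 - ‖g z‖ ^ 2 := by nlinarith [norm_nonneg (g z)]
  rw [hF.deriv, e1, e2, norm_mul, norm_mul, norm_neg, norm_inv, norm_real, norm_real,
    Real.norm_of_nonneg ht.le, Real.norm_of_nonpos (by nlinarith [norm_nonneg z]),
    inv_mul_le_iff₀ ht] at hschwarz
  linarith

lemma mapsTo_ball_or_eqOn_const (hg : DifferentiableOn ℂ g (ball 0 1))
    (hmaps : MapsTo g (ball 0 1) (closedBall 0 1)) :
    MapsTo g (ball 0 1) (ball 0 1) ∨ ∃ c : ℂ, ‖c‖ = 1 ∧ EqOn g (fun _ => c) (ball 0 1) := by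
  refine or_iff_not_imp_left.2 fun hnot => ?_
  simp only [MapsTo, not_forall] at hnot
  obtain ⟨w, hw, hgw⟩ := hnot
  have hgw1 : ‖g w‖ = 1 :=
    le_antisymm (mem_closedBall_zero_iff.1 (hmaps hw)) (by simpa using hgw)
  have hmax : IsMaxOn (norm ∘ g) (ball 0 1) w := fun x hx => by
    simpa [hgw1] using hmaps hx
  exact ⟨g w, hgw1, Complex.eqOn_of_isPreconnected_of_isMaxOn_norm
    (convex_ball 0 1).isPreconnected isOpen_ball hg hw hmax⟩

lemma norm_apply_mul_le_of_mapsTo_closedBall (hg : DifferentiableOn ℂ g (ball 0 1))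
    (hmaps : MapsTo g (ball 0 1) (closedBall 0 1)) (hz : z ∈ ball (0 : ℂ) 1) :
    ‖g z‖ * (1 + ‖g 0‖ * ‖z‖) ≤ ‖z‖ + ‖g 0‖ := by
  rcases mapsTo_ball_or_eqOn_const hg hmaps with hmaps | ⟨c, hc, hgc⟩
  · exact norm_apply_mul_le_of_mapsTo_ball hg hmaps hz
  · rw [hgc hz, hgc (mem_ball_self one_pos)]
    simp [hc, add_comm]

lemma norm_deriv_mul_le_of_mapsTo_closedBall (hg : DifferentiableOn ℂ g (ball 0 1))
    (hmaps : MapsTo g (ball 0 1) (closedBall 0 1)) (hz : z ∈ ball (0 : ℂ) 1) :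
    ‖deriv g z‖ * (1 - ‖z‖ ^ 2) ≤ 1 - ‖g z‖ ^ 2 := by
  rcases mapsTo_ball_or_eqOn_const hg hmaps with hmaps | ⟨c, hc, hgc⟩
  · exact norm_deriv_mul_le_of_mapsTo_ball hg hmaps hz
  · rw [(hgc.eventuallyEq_of_mem (isOpen_ball.mem_nhds hz)).deriv_eq, hgc hz]
    simp [hc]

end SchwarzPick

lemma one_sub_mul_one_add_mul_le_norm {u : ℂ} {κ : ℝ} (hκ₁ : -1 ≤ κ) (hκ₂ : κ ≤ 1)
    (hu : ‖u‖ ≤ 1) : (1 - ‖u‖) * (1 + κ * ‖u‖) ≤ ‖(1 - u) * (1 + κ * u)‖ := by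
  rcases le_or_gt 0 κ with hκ | hκ
  · -- here `1 + κ * ‖u‖ ≤ ‖1 + κ * u‖` fails, so expand the product instead
    have hexp : (1 - u) * (1 + κ * u) = 1 - (((1 - κ : ℝ) : ℂ) * u + κ * u ^ 2) := by
      push_cast; ring
    have hrest : ‖((1 - κ : ℝ) : ℂ) * u + κ * u ^ 2‖ ≤ (1 - κ) * ‖u‖ + κ * ‖u‖ ^ 2 := by
      refine (norm_add_le _ _).trans_eq ?_
      rw [norm_mul, norm_mul, norm_pow, norm_real, norm_real, Real.norm_of_nonneg hκ,
        Real.norm_of_nonneg (by linarith)]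
    calc (1 - ‖u‖) * (1 + κ * ‖u‖) = 1 - ((1 - κ) * ‖u‖ + κ * ‖u‖ ^ 2) := by ring
      _ ≤ 1 - ‖((1 - κ : ℝ) : ℂ) * u + κ * u ^ 2‖ := by linarith
      _ ≤ ‖(1 - u) * (1 + κ * u)‖ := by simpa [hexp] using norm_sub_norm_le (1 : ℂ) _
  · have h₁ : 1 - ‖u‖ ≤ ‖1 - u‖ := by simpa using norm_sub_norm_le (1 : ℂ) u
    have h₂ : 1 + κ * ‖u‖ ≤ ‖1 + κ * u‖ := by
      have := norm_sub_norm_le (1 : ℂ) (-(κ * u))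
      rw [norm_neg, norm_mul, norm_real, Real.norm_of_nonpos hκ.le, sub_neg_eq_add,
        norm_one] at this
      linarith
    rw [norm_mul]
    exact mul_le_mul h₁ h₂ (by nlinarith) (norm_nonneg _)

lemma add_div_one_add_mul_le {r t β κ : ℝ} (hr0 : 0 ≤ r) (hr1 : r < 1) (ht0 : 0 ≤ t)
    (ht1 : t ≤ 1) (hβ : 0 ≤ β) (hκ₁ : -1 ≤ κ) (hκ₂ : κ ≤ 1) (h : t * (1 + β * r) ≤ r + β) :
    (r + t) / (1 + κ * r * t) ≤
      (β * r ^ 2 + 2 * r + β) / (κ * r ^ 2 + (1 + κ) * β * r + 1) := by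
  have hrt : r * t < 1 := by nlinarith
  have hd₁ : 0 < 1 + κ * r * t := by nlinarith [mul_nonneg hr0 ht0]
  have hd₂ : 0 < κ * r ^ 2 + (1 + κ) * β * r + 1 := by
    nlinarith [mul_nonneg (mul_nonneg (by linarith : 0 ≤ 1 + κ) hβ) hr0]
  rw [div_le_div_iff₀ hd₁ hd₂]
  nlinarith [mul_nonneg (sub_nonneg.2 h) (by nlinarith : 0 ≤ 1 - κ * r ^ 2)]

section SchwarzFunction

variable {ω : ℂ → ℂ} {z : ℂ}

lemma mapsTo_dslope_zero_closedBall (hω : DifferentiableOn ℂ ω (ball 0 1))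
    (hmaps : MapsTo ω (ball 0 1) (ball 0 1)) (hω0 : ω 0 = 0) :
    MapsTo (dslope ω 0) (ball 0 1) (closedBall 0 1) := fun _ hw => by
  simpa using Complex.norm_dslope_le_div_of_mapsTo_ball hω
    (by simpa [hω0] using hmaps.mono_right ball_subset_closedBall) hw

lemma eq_mul_dslope_zero (hω0 : ω 0 = 0) (z : ℂ) : ω z = z * dslope ω 0 z := by
  simpa using (sub_smul_dslope_of_zero hω0 z).symm

lemma norm_mul_deriv_le (hω : DifferentiableOn ℂ ω (ball 0 1))
    (hmaps : MapsTo ω (ball 0 1) (ball 0 1)) (hω0 : ω 0 = 0) (hz : z ∈ ball (0 : ℂ) 1) :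
    ‖z * deriv ω z‖ ≤
      ‖z‖ * (‖dslope ω 0 z‖ + ‖z‖ * (1 - ‖dslope ω 0 z‖ ^ 2) / (1 - ‖z‖ ^ 2)) := by
  have hφ : DifferentiableOn ℂ (dslope ω 0) (ball 0 1) :=
    (Complex.differentiableOn_dslope (ball_mem_nhds 0 one_pos)).2 hω
  have hderiv : deriv ω z = dslope ω 0 z + z * deriv (dslope ω 0) z := by
    have := (hasDerivAt_id' z).mul (hφ.differentiableAt (isOpen_ball.mem_nhds hz)).hasDerivAt
    rw [(this.congr_of_eventuallyEq (.of_forall (eq_mul_dslope_zero hω0))).deriv, one_mul]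
  have hpick := norm_deriv_mul_le_of_mapsTo_closedBall hφ
    (mapsTo_dslope_zero_closedBall hω hmaps hω0) hz
  have hr : 0 < 1 - ‖z‖ ^ 2 := by nlinarith [norm_nonneg z, mem_ball_zero_iff.1 hz]
  rw [← le_div_iff₀ hr] at hpick
  rw [hderiv, norm_mul, mul_div_assoc]
  gcongr
  exact (norm_add_le _ _).trans (by rw [norm_mul]; gcongr)

theorem norm_mul_deriv_div_le {κ : ℝ} (hκ₁ : -1 ≤ κ) (hκ₂ : κ ≤ 1)
    (hω : DifferentiableOn ℂ ω (ball 0 1)) (hmaps : MapsTo ω (ball 0 1) (ball 0 1))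
    (hω0 : ω 0 = 0) (hz : z ∈ ball (0 : ℂ) 1) :
    ‖z * deriv ω z / ((1 - ω z) * (1 + κ * ω z))‖ ≤
      ‖z‖ / (1 - ‖z‖ ^ 2) * ((‖deriv ω 0‖ * ‖z‖ ^ 2 + 2 * ‖z‖ + ‖deriv ω 0‖) /
        (κ * ‖z‖ ^ 2 + (1 + κ) * ‖deriv ω 0‖ * ‖z‖ + 1)) := by
  have hφ : DifferentiableOn ℂ (dslope ω 0) (ball 0 1) :=
    (Complex.differentiableOn_dslope (ball_mem_nhds 0 one_pos)).2 hω
  have hφmaps := mapsTo_dslope_zero_closedBall hω hmaps hω0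
  have hnum := norm_mul_deriv_le hω hmaps hω0 hz
  have hpick := norm_apply_mul_le_of_mapsTo_closedBall hφ hφmaps hz
  rw [dslope_same] at hpick
  have hωz : ‖ω z‖ = ‖z‖ * ‖dslope ω 0 z‖ := by rw [eq_mul_dslope_zero hω0, norm_mul]
  have hr1 : ‖z‖ < 1 := mem_ball_zero_iff.1 hz
  have ht1 : ‖dslope ω 0 z‖ ≤ 1 := mem_closedBall_zero_iff.1 (hφmaps hz)
  have hden := one_sub_mul_one_add_mul_le_norm hκ₁ hκ₂ (mem_ball_zero_iff.1 (hmaps hz)).le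
  rw [hωz] at hden
  set r := ‖z‖
  set t := ‖dslope ω 0 z‖
  have hrt : r * t < 1 := by nlinarith [norm_nonneg z, norm_nonneg (dslope ω 0 z)]
  have hd₁ : 0 < 1 - r * t := by linarith
  have hd₂ : 0 < 1 + κ * (r * t) := by
    nlinarith [mul_nonneg (norm_nonneg z) (norm_nonneg (dslope ω 0 z))]
  have hr2 : 0 < 1 - r ^ 2 := by nlinarith [norm_nonneg z]
  calc _ = ‖z * deriv ω z‖ / ‖(1 - ω z) * (1 + κ * ω z)‖ := norm_div _ _
    _ ≤ r * (t + r * (1 - t ^ 2) / (1 - r ^ 2)) / ((1 - r * t) * (1 + κ * (r * t))) :=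
      div_le_div₀ ((norm_nonneg _).trans hnum) hnum (mul_pos hd₁ hd₂) hden
    _ = r / (1 - r ^ 2) * ((r + t) / (1 + κ * r * t)) := by
      rw [← mul_assoc κ] at hd₂
      field_simp
      ring
    _ ≤ _ := mul_le_mul_of_nonneg_left
      (add_div_one_add_mul_le (norm_nonneg _) hr1 (norm_nonneg _) ht1 (norm_nonneg _) hκ₁ hκ₂
        hpick) (div_nonneg (norm_nonneg _) hr2.le)

end SchwarzFunction

lemma norm_sub_one_lt_norm_add_of_lt_re {α : ℝ} {w : ℂ} (hα : α < 1) (hw : α < w.re) :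
    ‖w - 1‖ < ‖w + (1 - 2 * α)‖ := by
  rw [← sq_lt_sq₀ (norm_nonneg _) (norm_nonneg _), Complex.sq_norm, Complex.sq_norm,
    normSq_apply, normSq_apply]
  simp only [sub_re, add_re, sub_im, add_im, one_re, one_im, mul_re, mul_im, ofReal_re,
    ofReal_im, re_ofNat, im_ofNat]
  nlinarith

section SchwarzFunctionOfRe

variable {α : ℝ} {h : ℂ → ℂ}

-- inverse of the Möbius map `ω ↦ (1 + (1 - 2α) ω) / (1 - ω)` from the unit disc onto
-- `{w | α < w.re}`, so `h = (1 + (1 - 2α) ω) / (1 - ω)` for `ω := schwarzFunction α h`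
noncomputable def schwarzFunction (α : ℝ) (h : ℂ → ℂ) (z : ℂ) : ℂ :=
  (h z - 1) / (h z + (1 - 2 * α))

lemma hasDerivAt_schwarzFunction {z h' : ℂ} (hh : HasDerivAt h h' z)
    (hz : h z + (1 - 2 * α) ≠ 0) :
    HasDerivAt (schwarzFunction α h) (2 * (1 - α) * h' / (h z + (1 - 2 * α)) ^ 2) z :=
  ((hh.sub_const 1).div (hh.add_const _) hz).congr_deriv (by ring)

lemma mul_deriv_div_eq_mul_deriv_schwarzFunction {z : ℂ} (hα : α ≠ 1)
    (hh : DifferentiableAt ℂ h z) (hz : h z ≠ 0) (hK : h z + (1 - 2 * α) ≠ 0) :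
    z * deriv h z / h z = (2 * (1 - α) : ℝ) * (z * deriv (schwarzFunction α h) z /
      ((1 - schwarzFunction α h z) * (1 + (1 - 2 * α : ℝ) * schwarzFunction α h z))) := by
  have hα' : (1 - α : ℂ) ≠ 0 := sub_ne_zero.2 (by exact_mod_cast hα.symm)
  have e₁ : 1 - schwarzFunction α h z = 2 * (1 - α) / (h z + (1 - 2 * α)) := by
    rw [schwarzFunction]; field_simp; ring
  have e₂ : 1 + (1 - 2 * α : ℝ) * schwarzFunction α h z =
      2 * (1 - α) * h z / (h z + (1 - 2 * α)) := by
    rw [schwarzFunction]; push_cast; field_simp; ring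
  rw [(hasDerivAt_schwarzFunction hh.hasDerivAt hK).deriv, e₁, e₂]
  push_cast
  field_simp

lemma schwarzFunction_zero (h0 : h 0 = 1) : schwarzFunction α h 0 = 0 := by
  simp [schwarzFunction, h0]

lemma deriv_schwarzFunction_zero {b : ℝ} (hα : α ≠ 1) (hh : DifferentiableAt ℂ h 0)
    (h0 : h 0 = 1) (h1 : deriv h 0 = 2 * b * (1 - α)) : deriv (schwarzFunction α h) 0 = b := by
  have hα' : (1 - α : ℂ) ≠ 0 := sub_ne_zero.2 (by exact_mod_cast hα.symm)
  have hK : h 0 + (1 - 2 * α) = 2 * (1 - α) := by rw [h0]; ring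
  have hK0 : h 0 + (1 - 2 * α) ≠ 0 := hK ▸ mul_ne_zero two_ne_zero hα'
  rw [(hasDerivAt_schwarzFunction hh.hasDerivAt hK0).deriv, hK, h1]
  field_simp

lemma add_one_sub_two_mul_ne_zero_of_lt_re {w : ℂ} (hα : α < 1) (hw : α < w.re) :
    w + (1 - 2 * α) ≠ 0 :=
  norm_pos_iff.1 ((norm_nonneg _).trans_lt (norm_sub_one_lt_norm_add_of_lt_re hα hw))

lemma differentiableOn_schwarzFunction (hα : α < 1) (hdiff : DifferentiableOn ℂ h (ball 0 1))
    (hre : ∀ z ∈ ball (0 : ℂ) 1, α < (h z).re) :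
    DifferentiableOn ℂ (schwarzFunction α h) (ball 0 1) :=
  (hdiff.sub_const 1).div (hdiff.add_const _) fun w hw =>
    add_one_sub_two_mul_ne_zero_of_lt_re hα (hre w hw)

lemma mapsTo_schwarzFunction (hα : α < 1) (hre : ∀ z ∈ ball (0 : ℂ) 1, α < (h z).re) :
    MapsTo (schwarzFunction α h) (ball 0 1) (ball 0 1) := fun w hw => by
  rw [mem_ball_zero_iff, schwarzFunction, norm_div,
    div_lt_one (norm_pos_iff.2 (add_one_sub_two_mul_ne_zero_of_lt_re hα (hre w hw)))]
  exact norm_sub_one_lt_norm_add_of_lt_re hα (hre w hw)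

end SchwarzFunctionOfRe

theorem mccarty_bound_general (α b : ℝ) (hα0 : 0 ≤ α) (hα1 : α < 1)
    (h : ℂ → ℂ) (hdiff : DifferentiableOn ℂ h (Metric.ball (0 : ℂ) 1))
    (h0 : h 0 = 1) (h1 : deriv h 0 = 2 * b * (1 - α))
    (hre : ∀ z ∈ Metric.ball (0 : ℂ) 1, α < (h z).re) :
    ∀ (z : ℂ) (r : ℝ), ‖z‖ = r → r < 1 → h z ≠ 0 →
      ‖z * deriv h z / h z‖ ≤
        2 * (1 - α) * r / (1 - r ^ 2) *
          ((|b| * r ^ 2 + 2 * r + |b|) / ((1 - 2 * α) * r ^ 2 + 2 * (1 - α) * |b| * r + 1)) := by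
  rintro z r rfl hr hhz
  have hz : z ∈ ball (0 : ℂ) 1 := mem_ball_zero_iff.2 hr
  have hdiffAt : ∀ w ∈ ball (0 : ℂ) 1, DifferentiableAt ℂ h w := fun w hw =>
    hdiff.differentiableAt (isOpen_ball.mem_nhds hw)
  have key := norm_mul_deriv_div_le (κ := 1 - 2 * α) (by linarith) (by linarith)
    (differentiableOn_schwarzFunction hα1 hdiff hre) (mapsTo_schwarzFunction hα1 hre)
    (schwarzFunction_zero h0) hz
  rw [deriv_schwarzFunction_zero hα1.ne (hdiffAt 0 (mem_ball_self one_pos)) h0 h1, norm_real,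
    Real.norm_eq_abs, show 1 + (1 - 2 * α) = 2 * (1 - α) by ring] at key
  rw [mul_deriv_div_eq_mul_deriv_schwarzFunction hα1.ne (hdiffAt z hz) hhz
    (add_one_sub_two_mul_ne_zero_of_lt_re hα1 (hre z hz)), norm_mul, norm_real,
    Real.norm_of_nonneg (by linarith)]
  calc _ ≤ 2 * (1 - α) * (‖z‖ / (1 - ‖z‖ ^ 2) * _) := by gcongr
    _ = _ := by ring

theorem mccarty_bound (α b : ℝ) (hα0 : 0 ≤ α) (hα1 : α < 1) (hb : |b| ≤ 1)
    (h : ℂ → ℂ) (hdiff : DifferentiableOn ℂ h (Metric.ball (0 : ℂ) 1))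
    (h0 : h 0 = 1) (h1 : deriv h 0 = 2 * b * (1 - α))
    (hre : ∀ z ∈ Metric.ball (0 : ℂ) 1, α < (h z).re) :
    ∀ (z : ℂ) (r : ℝ), ‖z‖ = r → r < 1 → h z ≠ 0 →
      ‖z * deriv h z / h z‖ ≤
        2 * (1 - α) * r / (1 - r ^ 2) *
          ((|b| * r ^ 2 + 2 * r + |b|) / ((1 - 2 * α) * r ^ 2 + 2 * (1 - α) * |b| * r + 1)) :=
  mccarty_bound_general α b hα0 hα1 h hdiff h0 h1 hre
end
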